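/- arXiv:1212.3191 — 2 statements merged into one kernel-verified Lean document; each statement's English description precedes it below -/
import Mathlib

section
/- Carlitz identity: B_{n+m}(1; r) = Σ_{k=0}^{m} {m+r brace k+r}_r · B_n(1; k+r) for all nonnegative integers n, m, r, where B_n(1;r) denotes the r-Bell number. -/
open Finset

/-- `𝒜` is a set partition of `Fin N`: blocks are nonempty and every element
lies in exactly one block. -/
def IsSetPartition {N : ℕ} (𝒜 : Finset (Finset (Fin N))) : Prop :=
  (∀ t ∈ 𝒜, t.Nonempty) ∧ ∀ x : Fin N, ∃! t, t ∈ 𝒜 ∧ x ∈ t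

/-- The elements of `S` lie in pairwise distinct blocks of `𝒜`. -/
def DistinctBlocks {N : ℕ} (𝒜 : Finset (Finset (Fin N))) (S : Set (Fin N)) : Prop :=
  ∀ a ∈ S, ∀ b ∈ S, a ≠ b → ∀ t ∈ 𝒜, ¬(a ∈ t ∧ b ∈ t)

/-- The `r`-Stirling number of the second kind `{n+r brace k+r}_r`: the number of
partitions of `{1,…,n+r}` into `k+r` nonempty blocks with `1,…,r` in distinct blocks. -/
noncomputable def rStirling (r n k : ℕ) : ℕ :=
  Nat.card {𝒜 : Finset (Finset (Fin (n + r))) //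
    IsSetPartition 𝒜 ∧ 𝒜.card = k + r ∧ DistinctBlocks 𝒜 {x | (x : ℕ) < r}}

/-- The `(r₁,r₂)`-Stirling number of the second kind `{n+r₁+r₂ brace k+r₂}_{r₁,r₂}`. -/
noncomputable def rrStirling (r₁ r₂ n k : ℕ) : ℕ :=
  Nat.card {𝒜 : Finset (Finset (Fin (n + r₁ + r₂))) //
    IsSetPartition 𝒜 ∧ 𝒜.card = k + r₂ ∧
    DistinctBlocks 𝒜 {x | (x : ℕ) < r₁} ∧
    DistinctBlocks 𝒜 {x | r₁ ≤ (x : ℕ) ∧ (x : ℕ) < r₁ + r₂}}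

/-- The `r`-Bell polynomial `B_n(z;r) = Σ_{k=0}^n {n+r brace k+r}_r z^k`. -/
noncomputable def rBell (r n : ℕ) (z : ℝ) : ℝ :=
  ∑ k ∈ range (n + 1), (rStirling r n k : ℝ) * z ^ k

/-- The `(r₁,r₂)`-Bell polynomial `B_n(z;r₁,r₂) = Σ_{k=0}^{n+r₁} {n+r₁+r₂ brace k+r₂}_{r₁,r₂} z^k`. -/
noncomputable def rrBell (r₁ r₂ n : ℕ) (z : ℝ) : ℝ :=
  ∑ k ∈ range (n + r₁ + 1), (rrStirling r₁ r₂ n k : ℝ) * z ^ k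

namespace Carlitz
variable {N : ℕ}
noncomputable def pdown (p : Fin (N + 1)) (t : Finset (Fin (N + 1))) : Finset (Fin N) :=
  t.preimage p.succAbove Fin.succAbove_right_injective.injOn
def pup (p : Fin (N + 1)) (s : Finset (Fin N)) : Finset (Fin (N + 1)) :=
  s.image p.succAbove
@[simp] lemma mem_pdown {p : Fin (N+1)} {t x} : x ∈ pdown p t ↔ p.succAbove x ∈ t :=
  Finset.mem_preimage
lemma mem_pup {p : Fin (N+1)} {s y} : y ∈ pup p s ↔ ∃ x ∈ s, p.succAbove x = y :=
  Finset.mem_image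
lemma p_not_mem_pup {p : Fin (N+1)} {s} : p ∉ pup p s := by
  simp only [mem_pup]; rintro ⟨x, -, hx⟩; exact Fin.succAbove_ne p x hx
lemma pdown_pup (p : Fin (N+1)) (s) : pdown p (pup p s) = s := by
  ext x
  simp only [mem_pdown, mem_pup]
  constructor
  · rintro ⟨x', hx', h⟩; rwa [Fin.succAbove_right_injective h] at hx'
  · exact fun h => ⟨x, h, rfl⟩
lemma pup_pdown (p : Fin (N+1)) (t) : pup p (pdown p t) = t.erase p := by
  ext y
  simp only [mem_pup, mem_pdown, Finset.mem_erase]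
  constructor
  · rintro ⟨x, hx, rfl⟩; exact ⟨Fin.succAbove_ne p x, hx⟩
  · rintro ⟨hy, hyt⟩
    obtain ⟨x, hx⟩ := Fin.exists_succAbove_eq hy
    exact ⟨x, by rwa [hx], hx⟩
lemma pup_card {p : Fin (N+1)} (s) : (pup p s).card = s.card :=
  Finset.card_image_of_injective _ Fin.succAbove_right_injective
lemma pup_injective (p : Fin (N+1)) : Function.Injective (pup p) := fun s s' h => by
  rw [← pdown_pup p s, h, pdown_pup]
lemma pup_nonempty {p : Fin (N+1)} {s : Finset (Fin N)} (h : s.Nonempty) : (pup p s).Nonempty :=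
  h.image _
lemma pdown_nonempty {p : Fin (N+1)} {t} (ht : t.Nonempty) (hpt : p ∉ t) :
    (pdown p t).Nonempty := by
  obtain ⟨y, hy⟩ := ht
  obtain ⟨x, hx⟩ := Fin.exists_succAbove_eq (show y ≠ p from fun h => hpt (h ▸ hy))
  exact ⟨x, by simp [hx, hy]⟩
lemma pdown_eq_empty {p : Fin (N+1)} {t} (hpt : p ∈ t) :
    pdown p t = ∅ ↔ t = {p} := by
  constructor
  · intro h
    apply Finset.eq_singleton_iff_unique_mem.mpr
    refine ⟨hpt, fun y hy => by_contra fun hyp => ?_⟩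
    obtain ⟨x, hx⟩ := Fin.exists_succAbove_eq hyp
    exact absurd (mem_pdown.mpr (hx ▸ hy)) (by simp [h])
  · rintro rfl
    ext x; simp [Fin.succAbove_ne]
lemma blk_unique {𝒜 : Finset (Finset (Fin N))} (h : IsSetPartition 𝒜) {x : Fin N} {t t'}
    (ht : t ∈ 𝒜) (hxt : x ∈ t) (ht' : t' ∈ 𝒜) (hxt' : x ∈ t') : t = t' :=
  ((h.2 x).unique ⟨ht, hxt⟩ ⟨ht', hxt'⟩)

----------------------------------------------------------------
-- partition level

noncomputable def pD (p : Fin (N+1)) (𝒜 : Finset (Finset (Fin (N+1)))) :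
    Finset (Finset (Fin N)) := ((𝒜.image (pdown p)).erase ∅)

lemma mem_pD {p : Fin (N+1)} {𝒜 s} :
    s ∈ pD p 𝒜 ↔ s ≠ ∅ ∧ ∃ t ∈ 𝒜, pdown p t = s := by
  simp [pD, Finset.mem_erase, Finset.mem_image, eq_comm, and_comm]

lemma pD_partition {p : Fin (N+1)} {𝒜} (h : IsSetPartition 𝒜) : IsSetPartition (pD p 𝒜) := by
  constructor
  · intro s hs
    exact Finset.nonempty_iff_ne_empty.mpr (mem_pD.mp hs).1
  · intro x
    obtain ⟨t, ⟨ht, hyt⟩, huniq⟩ := h.2 (p.succAbove x)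
    refine ⟨pdown p t, ⟨mem_pD.mpr ⟨?_, t, ht, rfl⟩, mem_pdown.mpr hyt⟩, ?_⟩
    · exact Finset.nonempty_iff_ne_empty.mp ⟨x, mem_pdown.mpr hyt⟩
    · rintro s ⟨hs, hxs⟩
      obtain ⟨-, t', ht', rfl⟩ := mem_pD.mp hs
      rw [huniq t' ⟨ht', mem_pdown.mp hxs⟩]

noncomputable def pU1 (p : Fin (N+1)) (ℬ : Finset (Finset (Fin N))) :
    Finset (Finset (Fin (N+1))) := insert {p} (ℬ.image (pup p))

noncomputable def pU2 (p : Fin (N+1)) (ℬ : Finset (Finset (Fin N))) (s : Finset (Fin N)) :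
    Finset (Finset (Fin (N+1))) :=
  insert (insert p (pup p s)) ((ℬ.erase s).image (pup p))

lemma pU1_partition {p : Fin (N+1)} {ℬ} (h : IsSetPartition ℬ) : IsSetPartition (pU1 p ℬ) := by
  constructor
  · intro t ht
    rcases Finset.mem_insert.mp ht with rfl | ht
    · exact ⟨p, Finset.mem_singleton_self p⟩
    · obtain ⟨s, hs, rfl⟩ := Finset.mem_image.mp ht
      exact pup_nonempty (h.1 s hs)
  · intro y
    rcases eq_or_ne p y with rfl | hy
    · refine ⟨({p} : Finset (Fin (N+1))), ⟨Finset.mem_insert_self _ _, Finset.mem_singleton_self p⟩, ?_⟩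
      rintro t ⟨ht, hpt⟩
      rcases Finset.mem_insert.mp ht with rfl | ht
      · rfl
      · obtain ⟨s, hs, rfl⟩ := Finset.mem_image.mp ht
        exact absurd hpt p_not_mem_pup
    · obtain ⟨x, rfl⟩ := Fin.exists_succAbove_eq hy.symm
      obtain ⟨s, ⟨hs, hxs⟩, huniq⟩ := h.2 x
      refine ⟨pup p s, ⟨Finset.mem_insert_of_mem (Finset.mem_image_of_mem _ hs),
        Finset.mem_image_of_mem _ hxs⟩, ?_⟩
      rintro t ⟨ht, hyt⟩
      rcases Finset.mem_insert.mp ht with rfl | ht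
      · exact absurd (Finset.mem_singleton.mp hyt) (Fin.succAbove_ne p x)
      · obtain ⟨s', hs', rfl⟩ := Finset.mem_image.mp ht
        obtain ⟨x', hx's', hx'⟩ := mem_pup.mp hyt
        rw [huniq s' ⟨hs', by rwa [Fin.succAbove_right_injective hx'] at hx's'⟩]

lemma pU1_card {p : Fin (N+1)} {ℬ} : (pU1 p ℬ).card = ℬ.card + 1 := by
  rw [pU1, Finset.card_insert_of_notMem, Finset.card_image_of_injective _ (pup_injective p)]
  intro hmem
  obtain ⟨s, -, hs⟩ := Finset.mem_image.mp hmem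
  exact p_not_mem_pup (hs ▸ Finset.mem_singleton_self p)

lemma pdown_singleton {p : Fin (N+1)} : pdown p ({p} : Finset (Fin (N+1))) = ∅ := by
  ext x; simp [Fin.succAbove_ne]

lemma pD_pU1 {p : Fin (N+1)} {ℬ} (h : IsSetPartition ℬ) : pD p (pU1 p ℬ) = ℬ := by
  have h1 : Finset.image (pdown p) (pU1 p ℬ) = insert ∅ ℬ := by
    rw [pU1, Finset.image_insert, Finset.image_image, pdown_singleton]
    congr 1
    have : (pdown p ∘ pup p) = id := funext fun s => pdown_pup p s
    rw [this, Finset.image_id]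
  rw [pD, h1, Finset.erase_insert]
  intro h0
  exact absurd (h.1 ∅ h0) (by simp)

lemma not_mem_singleton_p {p : Fin (N+1)} {𝒜} (h : IsSetPartition 𝒜) (hp : {p} ∈ 𝒜)
    {t} (ht : t ∈ 𝒜.erase {p}) : p ∉ t := by
  intro hpt
  exact (Finset.mem_erase.mp ht).1
    (blk_unique h (Finset.mem_erase.mp ht).2 hpt hp (Finset.mem_singleton_self p))

lemma image_up_down {p : Fin (N+1)} {𝒞 : Finset (Finset (Fin (N+1)))}
    (hp : ∀ t ∈ 𝒞, p ∉ t) :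
    Finset.image (pup p) (Finset.image (pdown p) 𝒞) = 𝒞 := by
  rw [Finset.image_image]
  have : ∀ t ∈ 𝒞, (pup p ∘ pdown p) t = t := by
    intro t ht
    simp only [Function.comp_apply, pup_pdown]
    exact Finset.erase_eq_of_notMem (hp t ht)
  calc Finset.image (pup p ∘ pdown p) 𝒞 = Finset.image id 𝒞 := Finset.image_congr this
    _ = 𝒞 := Finset.image_id

lemma pU1_pD {p : Fin (N+1)} {𝒜} (h : IsSetPartition 𝒜) (hp : {p} ∈ 𝒜) :
    pU1 p (pD p 𝒜) = 𝒜 := by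
  have hrest : ∀ t ∈ 𝒜.erase {p}, p ∉ t := fun t ht => not_mem_singleton_p h hp ht
  have h1 : Finset.image (pdown p) 𝒜 = insert ∅ (Finset.image (pdown p) (𝒜.erase {p})) := by
    conv_lhs => rw [← Finset.insert_erase hp]
    rw [Finset.image_insert, pdown_singleton]
  have h2 : ∅ ∉ Finset.image (pdown p) (𝒜.erase {p}) := by
    intro hmem
    obtain ⟨t, ht, hts⟩ := Finset.mem_image.mp hmem
    exact Finset.nonempty_iff_ne_empty.mp
      (pdown_nonempty (h.1 t (Finset.mem_erase.mp ht).2) (hrest t ht)) hts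
  have h3 : pD p 𝒜 = Finset.image (pdown p) (𝒜.erase {p}) := by
    rw [pD, h1, Finset.erase_insert h2]
  rw [pU1, h3, image_up_down hrest, Finset.insert_erase hp]

lemma pU2_partition {p : Fin (N+1)} {ℬ s} (h : IsSetPartition ℬ) (hs : s ∈ ℬ) :
    IsSetPartition (pU2 p ℬ s) := by
  constructor
  · intro t ht
    rcases Finset.mem_insert.mp ht with rfl | ht
    · exact ⟨p, Finset.mem_insert_self _ _⟩
    · obtain ⟨s', hs', rfl⟩ := Finset.mem_image.mp ht
      exact pup_nonempty (h.1 s' (Finset.mem_erase.mp hs').2)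
  · intro y
    rcases eq_or_ne p y with rfl | hy
    · refine ⟨insert p (pup p s), ⟨Finset.mem_insert_self _ _, Finset.mem_insert_self _ _⟩, ?_⟩
      rintro t ⟨ht, hpt⟩
      rcases Finset.mem_insert.mp ht with rfl | ht
      · rfl
      · obtain ⟨s', hs', rfl⟩ := Finset.mem_image.mp ht
        exact absurd hpt p_not_mem_pup
    · obtain ⟨x, rfl⟩ := Fin.exists_succAbove_eq hy.symm
      obtain ⟨s₀, ⟨hs₀, hxs₀⟩, huniq⟩ := h.2 x
      have key : ∀ t, t ∈ pU2 p ℬ s → p.succAbove x ∈ t →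
          t = (if s₀ = s then insert p (pup p s) else pup p s₀) := by
        intro t ht hyt
        rcases Finset.mem_insert.mp ht with rfl | ht
        · have hxs : x ∈ s := by
            rcases Finset.mem_insert.mp hyt with hc | hc
            · exact absurd hc (Fin.succAbove_ne p x)
            · obtain ⟨x', hx', he⟩ := mem_pup.mp hc
              rwa [Fin.succAbove_right_injective he] at hx'
          rw [if_pos (huniq s ⟨hs, hxs⟩).symm]
        · obtain ⟨s', hs', rfl⟩ := Finset.mem_image.mp ht
          obtain ⟨x', hx', he⟩ := mem_pup.mp hyt
          have hx : x ∈ s' := by rwa [Fin.succAbove_right_injective he] at hx'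
          have : s₀ = s' := (huniq s' ⟨(Finset.mem_erase.mp hs').2, hx⟩).symm
          subst this
          rw [if_neg (Finset.mem_erase.mp hs').1]
      refine ⟨if s₀ = s then insert p (pup p s) else pup p s₀, ⟨?_, ?_⟩, fun t ⟨ht, hyt⟩ => key t ht hyt⟩
      · split
        · exact Finset.mem_insert_self _ _
        · next hne =>
          exact Finset.mem_insert_of_mem (Finset.mem_image_of_mem _ (Finset.mem_erase.mpr ⟨hne, hs₀⟩))
      · split
        · next heq =>
            subst heq
            exact Finset.mem_insert_of_mem (Finset.mem_image_of_mem _ hxs₀)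
        · exact Finset.mem_image_of_mem _ hxs₀

lemma pU2_card {p : Fin (N+1)} {ℬ s} (hs : s ∈ ℬ) : (pU2 p ℬ s).card = ℬ.card := by
  rw [pU2, Finset.card_insert_of_notMem, Finset.card_image_of_injective _ (pup_injective p),
    Finset.card_erase_add_one hs]
  intro hmem
  obtain ⟨s', -, hs'⟩ := Finset.mem_image.mp hmem
  exact p_not_mem_pup (hs' ▸ Finset.mem_insert_self p _)

lemma pdown_insert_p {p : Fin (N+1)} {t} : pdown p (insert p t) = pdown p t := by
  ext x; simp [Fin.succAbove_ne p x, (Fin.succAbove_ne p x)]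

lemma pD_pU2 {p : Fin (N+1)} {ℬ s} (h : IsSetPartition ℬ) (hs : s ∈ ℬ) :
    pD p (pU2 p ℬ s) = ℬ := by
  have hcomp : ∀ 𝒞 : Finset (Finset (Fin N)),
      Finset.image (pdown p) (Finset.image (pup p) 𝒞) = 𝒞 := by
    intro 𝒞
    rw [Finset.image_image]
    have : (pdown p ∘ pup p) = id := funext fun s' => pdown_pup p s'
    rw [this, Finset.image_id]
  have h1 : Finset.image (pdown p) (pU2 p ℬ s) = ℬ := by
    rw [pU2, Finset.image_insert, pdown_insert_p, pdown_pup, hcomp, Finset.insert_erase hs]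
  rw [pD, h1]
  exact Finset.erase_eq_of_notMem (fun h0 => by simpa using h.1 ∅ h0)


lemma pU2_pD {p : Fin (N+1)} {𝒜 T} (h : IsSetPartition 𝒜) (hT : T ∈ 𝒜) (hpT : p ∈ T)
    (hne : T ≠ {p}) : pU2 p (pD p 𝒜) (pdown p T) = 𝒜 := by
  have hsne : (pdown p T).Nonempty := by
    have : ∃ y ∈ T, y ≠ p := by
      by_contra hcon
      push_neg at hcon
      exact hne (Finset.eq_singleton_iff_unique_mem.mpr ⟨hpT, hcon⟩)
    obtain ⟨y, hy, hyne⟩ := this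
    obtain ⟨x, hx⟩ := Fin.exists_succAbove_eq hyne
    exact ⟨x, mem_pdown.mpr (hx ▸ hy)⟩
  have hrest : ∀ t ∈ 𝒜.erase T, p ∉ t := fun t ht hpt =>
    (Finset.mem_erase.mp ht).1 (blk_unique h (Finset.mem_erase.mp ht).2 hpt hT hpT)
  have h3 : pD p 𝒜 = insert (pdown p T) (Finset.image (pdown p) (𝒜.erase T)) := by
    rw [pD]
    conv_lhs => rw [← Finset.insert_erase hT]
    rw [Finset.image_insert]
    apply Finset.erase_eq_of_notMem
    intro h0
    rcases Finset.mem_insert.mp h0 with h0 | h0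
    · exact Finset.nonempty_iff_ne_empty.mp hsne h0.symm
    · obtain ⟨t, ht, hts⟩ := Finset.mem_image.mp h0
      exact Finset.nonempty_iff_ne_empty.mp
        (pdown_nonempty (h.1 t (Finset.mem_erase.mp ht).2) (hrest t ht)) hts
  have hs_not : pdown p T ∉ Finset.image (pdown p) (𝒜.erase T) := by
    intro hmem
    obtain ⟨t, ht, hts⟩ := Finset.mem_image.mp hmem
    obtain ⟨x, hx⟩ := hsne
    exact (Finset.mem_erase.mp ht).1
      (blk_unique h (Finset.mem_erase.mp ht).2 (mem_pdown.mp (hts ▸ hx)) hT (mem_pdown.mp hx))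
  rw [pU2, h3, Finset.erase_insert hs_not, image_up_down hrest, pup_pdown,
    Finset.insert_erase hpT, Finset.insert_erase hT]

lemma DB_pD {p : Fin (N+1)} {𝒜 : Finset (Finset (Fin (N+1)))} {r : ℕ}
    (hval : ∀ x : Fin N, ((p.succAbove x : ℕ) < r ↔ (x : ℕ) < r))
    (hpr : ¬((p : ℕ) < r)) :
    DistinctBlocks 𝒜 {x | (x : ℕ) < r} ↔ DistinctBlocks (pD p 𝒜) {x | (x : ℕ) < r} := by
  constructor
  · intro hdb a ha b hb hab t ht ⟨hat, hbt⟩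
    obtain ⟨-, t', ht', rfl⟩ := mem_pD.mp ht
    exact hdb (p.succAbove a) ((hval a).mpr ha) (p.succAbove b) ((hval b).mpr hb)
      (fun hc => hab (Fin.succAbove_right_injective hc)) t' ht'
      ⟨mem_pdown.mp hat, mem_pdown.mp hbt⟩
  · intro hdb a ha b hb hab t ht ⟨hat, hbt⟩
    have hap : a ≠ p := fun hc => hpr (hc ▸ ha)
    have hbp : b ≠ p := fun hc => hpr (hc ▸ hb)
    obtain ⟨a', ha'⟩ := Fin.exists_succAbove_eq hap
    obtain ⟨b', hb'⟩ := Fin.exists_succAbove_eq hbp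
    have hmem : pdown p t ∈ pD p 𝒜 := mem_pD.mpr
      ⟨Finset.nonempty_iff_ne_empty.mp ⟨a', mem_pdown.mpr (ha' ▸ hat)⟩, t, ht, rfl⟩
    exact hdb a' ((hval a').mp (ha' ▸ ha)) b' ((hval b').mp (hb' ▸ hb))
      (fun hc => hab (by rw [← ha', ← hb', hc])) (pdown p t) hmem
      ⟨mem_pdown.mpr (ha' ▸ hat), mem_pdown.mpr (hb' ▸ hbt)⟩

----------------------------------------------------------------
-- basic cardinality facts about partitions

lemma blocks_disjoint {M : ℕ} {𝒜 : Finset (Finset (Fin M))} (h : IsSetPartition 𝒜)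
    {t t'} (ht : t ∈ 𝒜) (ht' : t' ∈ 𝒜) (hne : t ≠ t') : Disjoint t t' := by
  rw [Finset.disjoint_left]
  intro x hxt hxt'
  exact hne (blk_unique h ht hxt ht' hxt')

lemma sum_card_blocks {M : ℕ} {𝒜 : Finset (Finset (Fin M))} (h : IsSetPartition 𝒜) :
    ∑ t ∈ 𝒜, t.card = M := by
  have hb : 𝒜.biUnion id = Finset.univ := by
    ext x
    simp only [Finset.mem_biUnion, id, Finset.mem_univ, iff_true]
    obtain ⟨t, ⟨ht, hxt⟩, -⟩ := h.2 x
    exact ⟨t, ht, hxt⟩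
  calc ∑ t ∈ 𝒜, t.card = (𝒜.biUnion id).card :=
        (Finset.card_biUnion (fun t ht t' ht' hne => blocks_disjoint h ht ht' hne)).symm
    _ = M := by rw [hb, Finset.card_univ, Fintype.card_fin]

lemma card_le_ground {M : ℕ} {𝒜 : Finset (Finset (Fin M))} (h : IsSetPartition 𝒜) :
    𝒜.card ≤ M := by
  calc 𝒜.card = ∑ _t ∈ 𝒜, 1 := by rw [Finset.sum_const, smul_eq_mul, mul_one]
    _ ≤ ∑ t ∈ 𝒜, t.card := Finset.sum_le_sum (fun t ht => (h.1 t ht).card_pos)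
    _ = M := sum_card_blocks h

noncomputable def blkOf {M : ℕ} (𝒜 : Finset (Finset (Fin M))) (x : Fin M) : Finset (Fin M) :=
  (𝒜.filter (x ∈ ·)).sup id

lemma blkOf_eq {M : ℕ} {𝒜 : Finset (Finset (Fin M))} (h : IsSetPartition 𝒜) {x t}
    (ht : t ∈ 𝒜) (hxt : x ∈ t) : blkOf 𝒜 x = t := by
  have : 𝒜.filter (x ∈ ·) = {t} := by
    ext t'
    simp only [Finset.mem_filter, Finset.mem_singleton]
    constructor
    · rintro ⟨ht', hxt'⟩; exact blk_unique h ht' hxt' ht hxt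
    · rintro rfl; exact ⟨ht, hxt⟩
  rw [blkOf, this, Finset.sup_singleton, id]

lemma card_filter_val_lt {M r : ℕ} (hr : r ≤ M) :
    ((Finset.univ : Finset (Fin M)).filter (fun x : Fin M => (x : ℕ) < r)).card = r := by
  have h1 : ((Finset.univ : Finset (Fin M)).filter (fun x : Fin M => (x : ℕ) < r)) =
      (Finset.range r).attachFin (fun m hm => lt_of_lt_of_le (Finset.mem_range.mp hm) hr) := by
    ext x
    simp [Finset.mem_attachFin]
  rw [h1, Finset.card_attachFin, Finset.card_range]

lemma r_le_card {M r : ℕ} {𝒜 : Finset (Finset (Fin M))} (h : IsSetPartition 𝒜)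
    (hdb : DistinctBlocks 𝒜 {x | (x : ℕ) < r}) (hr : r ≤ M) : r ≤ 𝒜.card := by
  rw [← card_filter_val_lt (M := M) hr]
  apply Finset.card_le_card_of_injOn (blkOf 𝒜)
  · intro x hx
    obtain ⟨t, ⟨ht, hxt⟩, -⟩ := h.2 x
    rw [blkOf_eq h ht hxt]; exact ht
  · intro x hx y hy hxy
    simp only [Finset.coe_filter, Set.mem_setOf_eq, Finset.mem_univ, true_and] at hx hy
    by_contra hne
    obtain ⟨t, ⟨ht, hxt⟩, -⟩ := h.2 x
    obtain ⟨t', ⟨ht', hyt'⟩, -⟩ := h.2 y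
    rw [blkOf_eq h ht hxt, blkOf_eq h ht' hyt'] at hxy
    subst hxy
    exact hdb x hx y hy hne t ht ⟨hxt, hyt'⟩

----------------------------------------------------------------
-- the counting finsets

open Classical in
noncomputable def Pfin (M c r : ℕ) : Finset (Finset (Finset (Fin M))) :=
  Finset.univ.filter
    (fun 𝒜 => IsSetPartition 𝒜 ∧ 𝒜.card = c ∧ DistinctBlocks 𝒜 {x | (x : ℕ) < r})

open Classical in
noncomputable def Ptot (M r : ℕ) : Finset (Finset (Finset (Fin M))) :=
  Finset.univ.filter (fun 𝒜 => IsSetPartition 𝒜 ∧ DistinctBlocks 𝒜 {x | (x : ℕ) < r})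

lemma mem_Pfin {M c r 𝒜} : 𝒜 ∈ Pfin M c r ↔
    IsSetPartition 𝒜 ∧ 𝒜.card = c ∧ DistinctBlocks 𝒜 {x | (x : ℕ) < r} := by
  simp [Pfin]

lemma mem_Ptot {M r 𝒜} : 𝒜 ∈ Ptot M r ↔
    IsSetPartition 𝒜 ∧ DistinctBlocks 𝒜 {x | (x : ℕ) < r} := by
  simp [Ptot]

lemma rStirling_eq_card (r n k : ℕ) : rStirling r n k = (Pfin (n + r) (k + r) r).card := by
  classical
  rw [rStirling, Nat.card_eq_fintype_card, Fintype.card_subtype]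
  congr 1


----------------------------------------------------------------
-- counting bijections

lemma pdownT_nonempty {p : Fin (N+1)} {T : Finset (Fin (N+1))} (hpT : p ∈ T)
    (hne : T ≠ {p}) : (pdown p T).Nonempty := by
  have : ∃ y ∈ T, y ≠ p := by
    by_contra hcon
    push_neg at hcon
    exact hne (Finset.eq_singleton_iff_unique_mem.mpr ⟨hpT, hcon⟩)
  obtain ⟨y, hy, hyne⟩ := this
  obtain ⟨x, hx⟩ := Fin.exists_succAbove_eq hyne
  exact ⟨x, mem_pdown.mpr (hx ▸ hy)⟩

lemma singleton_p_not_mem_pU2 {p : Fin (N+1)} {ℬ s} (hB : IsSetPartition ℬ) (hs : s ∈ ℬ) :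
    ({p} : Finset (Fin (N+1))) ∉ pU2 p ℬ s := by
  intro hmem
  rcases Finset.mem_insert.mp hmem with hc | hc
  · obtain ⟨x, hx⟩ := hB.1 s hs
    have : p.succAbove x ∈ ({p} : Finset (Fin (N+1))) := by
      rw [hc]; exact Finset.mem_insert_of_mem (Finset.mem_image_of_mem _ hx)
    exact Fin.succAbove_ne p x (Finset.mem_singleton.mp this)
  · obtain ⟨s', -, hs'⟩ := Finset.mem_image.mp hc
    exact p_not_mem_pup (hs' ▸ Finset.mem_singleton_self p)

section Bij

variable {r : ℕ} {p : Fin (N+1)}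

lemma A1 (hval : ∀ x : Fin N, ((p.succAbove x : ℕ) < r ↔ (x : ℕ) < r))
    (hpr : ¬((p : ℕ) < r)) (c : ℕ) :
    ((Pfin (N+1) (c+1) r).filter (fun 𝒜 => ({p} : Finset (Fin (N+1))) ∈ 𝒜)).card
      = (Pfin N c r).card := by
  apply Finset.card_bij' (fun 𝒜 _ => pD p 𝒜) (fun ℬ _ => pU1 p ℬ)
  · intro 𝒜 h𝒜
    obtain ⟨h𝒜, hsp⟩ := Finset.mem_filter.mp h𝒜
    obtain ⟨hpart, hcard, hdb⟩ := mem_Pfin.mp h𝒜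
    have hcd : 𝒜.card = (pD p 𝒜).card + 1 := by
      conv_lhs => rw [← pU1_pD hpart hsp]
      exact pU1_card
    exact mem_Pfin.mpr ⟨pD_partition hpart, by omega, (DB_pD hval hpr).mp hdb⟩
  · intro ℬ hB
    obtain ⟨hpart, hcard, hdb⟩ := mem_Pfin.mp hB
    refine Finset.mem_filter.mpr ⟨mem_Pfin.mpr ⟨pU1_partition hpart, ?_, ?_⟩,
      Finset.mem_insert_self _ _⟩
    · rw [pU1_card, hcard]
    · rw [DB_pD hval hpr, pD_pU1 hpart]
      exact hdb
  · intro 𝒜 h𝒜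
    obtain ⟨h𝒜, hsp⟩ := Finset.mem_filter.mp h𝒜
    exact pU1_pD (mem_Pfin.mp h𝒜).1 hsp
  · intro ℬ hB
    exact pD_pU1 (mem_Pfin.mp hB).1

lemma A0 (hval : ∀ x : Fin N, ((p.succAbove x : ℕ) < r ↔ (x : ℕ) < r))
    (hpr : ¬((p : ℕ) < r)) (hrN : r ≤ N) :
    (Pfin (N+1) r r).filter (fun 𝒜 => ({p} : Finset (Fin (N+1))) ∈ 𝒜) = ∅ := by
  rw [Finset.filter_eq_empty_iff]
  intro 𝒜 h𝒜 hsp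
  obtain ⟨hpart, hcard, hdb⟩ := mem_Pfin.mp h𝒜
  have hcd : 𝒜.card = (pD p 𝒜).card + 1 := by
    conv_lhs => rw [← pU1_pD hpart hsp]
    exact pU1_card
  have hge : r ≤ (pD p 𝒜).card :=
    r_le_card (pD_partition hpart) ((DB_pD hval hpr).mp hdb) hrN
  omega

lemma A2 (hval : ∀ x : Fin N, ((p.succAbove x : ℕ) < r ↔ (x : ℕ) < r))
    (hpr : ¬((p : ℕ) < r)) (c : ℕ) :
    ((Pfin (N+1) c r).filter (fun 𝒜 => ({p} : Finset (Fin (N+1))) ∉ 𝒜)).card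
      = c * (Pfin N c r).card := by
  have hs : ((Pfin N c r).sigma (fun ℬ => ℬ)).card = c * (Pfin N c r).card := by
    rw [Finset.card_sigma,
      Finset.sum_congr rfl (fun ℬ hB => (mem_Pfin.mp hB).2.1),
      Finset.sum_const, smul_eq_mul, mul_comm]
  rw [← hs]
  apply Finset.card_bij' (fun 𝒜 _ => (⟨pD p 𝒜, pdown p (blkOf 𝒜 p)⟩ : Σ _ : _, _))
    (fun q _ => pU2 p q.1 q.2)
  · intro 𝒜 h𝒜
    obtain ⟨h𝒜, hnsp⟩ := Finset.mem_filter.mp h𝒜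
    obtain ⟨hpart, hcard, hdb⟩ := mem_Pfin.mp h𝒜
    obtain ⟨T, ⟨hT, hpT⟩, -⟩ := hpart.2 p
    rw [blkOf_eq hpart hT hpT]
    have hTne : T ≠ {p} := fun hc => hnsp (hc ▸ hT)
    have hmem : pdown p T ∈ pD p 𝒜 := mem_pD.mpr
      ⟨Finset.nonempty_iff_ne_empty.mp (pdownT_nonempty hpT hTne), T, hT, rfl⟩
    refine Finset.mem_sigma.mpr ⟨mem_Pfin.mpr ⟨pD_partition hpart, ?_, (DB_pD hval hpr).mp hdb⟩, hmem⟩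
    have h4 : 𝒜.card = (pD p 𝒜).card := by
      conv_lhs => rw [← pU2_pD hpart hT hpT hTne]
      exact pU2_card hmem
    show (pD p 𝒜).card = c
    omega
  · rintro ⟨ℬ, s⟩ hq
    obtain ⟨hB, hsB⟩ := Finset.mem_sigma.mp hq
    obtain ⟨hpart, hcard, hdb⟩ := mem_Pfin.mp hB
    refine Finset.mem_filter.mpr ⟨mem_Pfin.mpr ⟨pU2_partition hpart hsB, ?_, ?_⟩,
      singleton_p_not_mem_pU2 hpart hsB⟩
    · rw [pU2_card hsB, hcard]
    · rw [DB_pD hval hpr, pD_pU2 hpart hsB]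
      exact hdb
  · intro 𝒜 h𝒜
    obtain ⟨h𝒜, hnsp⟩ := Finset.mem_filter.mp h𝒜
    obtain ⟨hpart, hcard, hdb⟩ := mem_Pfin.mp h𝒜
    obtain ⟨T, ⟨hT, hpT⟩, -⟩ := hpart.2 p
    have hTne : T ≠ {p} := fun hc => hnsp (hc ▸ hT)
    simp only
    rw [blkOf_eq hpart hT hpT]
    exact pU2_pD hpart hT hpT hTne
  · rintro ⟨ℬ, s⟩ hq
    obtain ⟨hB, hsB⟩ := Finset.mem_sigma.mp hq
    obtain ⟨hpart, hcard, hdb⟩ := mem_Pfin.mp hB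
    have h1 : pD p (pU2 p ℬ s) = ℬ := pD_pU2 hpart hsB
    have h2 : blkOf (pU2 p ℬ s) p = insert p (pup p s) :=
      blkOf_eq (pU2_partition hpart hsB) (Finset.mem_insert_self _ _) (Finset.mem_insert_self _ _)
    have h3 : pdown p (blkOf (pU2 p ℬ s) p) = s := by
      rw [h2, pdown_insert_p, pdown_pup]
    simp only [h1, h3]


lemma pdown_filter_subset {p : Fin (N+1)} (T : Finset (Fin (N+1))) (q : Fin (N+1) → Prop)
    [DecidablePred q] : pdown p (T.filter q) ⊆ pdown p T := fun x hx =>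
  mem_pdown.mpr (Finset.mem_filter.mp (mem_pdown.mp hx)).1

lemma blkOf_mem {M : ℕ} {𝒜 : Finset (Finset (Fin M))} (h : IsSetPartition 𝒜) (x : Fin M) :
    blkOf 𝒜 x ∈ 𝒜 ∧ x ∈ blkOf 𝒜 x := by
  obtain ⟨t, ⟨ht, hxt⟩, -⟩ := h.2 x
  rw [blkOf_eq h ht hxt]
  exact ⟨ht, hxt⟩

lemma min'_eq_of_eq_singleton {α : Type*} [LinearOrder α] {S : Finset α} {x : α}
    (h : S = {x}) (hne : S.Nonempty) : S.min' hne = x := by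
  subst h
  exact Finset.min'_singleton x

lemma spec_of_pU2 {r : ℕ} {p : Fin (N+1)}
    (hval : ∀ x : Fin N, ((p.succAbove x : ℕ) < r ↔ (x : ℕ) < r))
    {ℬ : Finset (Finset (Fin N))} {x : Fin N} (hB : IsSetPartition ℬ)
    (hdb : DistinctBlocks ℬ {x | (x : ℕ) < r}) (hx : (x : ℕ) < r)
    {blk} (hblk : blk ∈ ℬ) (hxblk : x ∈ blk) :
    pdown p ((blkOf (pU2 p ℬ blk) p).filter (fun b : Fin (N+1) => (b : ℕ) < r)) = {x} := by
  have h2 : blkOf (pU2 p ℬ blk) p = insert p (pup p blk) :=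
    blkOf_eq (pU2_partition hB hblk) (Finset.mem_insert_self _ _) (Finset.mem_insert_self _ _)
  ext b'
  simp only [mem_pdown, h2, Finset.mem_filter, Finset.mem_insert, Finset.mem_singleton]
  constructor
  · rintro ⟨hmem, hbr⟩
    rcases hmem with hc | hc
    · exact absurd hc (Fin.succAbove_ne p b')
    · have hb'blk : b' ∈ blk := by
        obtain ⟨b'', hb'', he⟩ := mem_pup.mp hc
        rwa [Fin.succAbove_right_injective he] at hb''
      have hb'r : (b' : ℕ) < r := (hval b').mp hbr
      by_contra hne
      exact hdb x hx b' hb'r (fun hc' => hne hc'.symm) blk hblk ⟨hxblk, hb'blk⟩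
  · intro heq
    refine ⟨Or.inr ?_, ?_⟩
    · rw [heq]; exact Finset.mem_image_of_mem _ hxblk
    · rw [heq]; exact (hval x).mpr hx

lemma B1 {r : ℕ} {p : Fin (N+1)}
    (hval : ∀ x : Fin N, ((p.succAbove x : ℕ) < r ↔ (x : ℕ) < r))
    (hpr : ¬((p : ℕ) < r)) (hrN : r ≤ N) :
    ((Ptot (N+1) r).filter
        (fun 𝒜 => ¬ ∀ t ∈ 𝒜, p ∈ t → ∀ b : Fin (N+1), b ∈ t → ¬((b : ℕ) < r))).card
      = r * (Ptot N r).card := by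
  classical
  have htarget : ((Ptot N r) ×ˢ ((Finset.univ : Finset (Fin N)).filter
      (fun x : Fin N => (x : ℕ) < r))).card = r * (Ptot N r).card := by
    rw [Finset.card_product, card_filter_val_lt hrN, mul_comm]
  rw [← htarget]
  have hSne : ∀ 𝒜 ∈ (Ptot (N+1) r).filter
      (fun 𝒜 => ¬ ∀ t ∈ 𝒜, p ∈ t → ∀ b : Fin (N+1), b ∈ t → ¬((b : ℕ) < r)),
      (pdown p ((blkOf 𝒜 p).filter (fun b : Fin (N+1) => (b : ℕ) < r))).Nonempty := by
    intro 𝒜 h𝒜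
    obtain ⟨h𝒜', hneg⟩ := Finset.mem_filter.mp h𝒜
    obtain ⟨hpart, hdb⟩ := mem_Ptot.mp h𝒜'
    push_neg at hneg
    obtain ⟨t, ht, hpt, b, hbt, hbr⟩ := hneg
    rw [blkOf_eq hpart ht hpt]
    have hbp : b ≠ p := fun hc => hpr (hc ▸ hbr)
    obtain ⟨b', hb'⟩ := Fin.exists_succAbove_eq hbp
    exact ⟨b', mem_pdown.mpr (by rw [hb']; exact Finset.mem_filter.mpr ⟨hbt, hb' ▸ hbr⟩)⟩
  apply Finset.card_bij (fun 𝒜 h𝒜 => (pD p 𝒜,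
    (pdown p ((blkOf 𝒜 p).filter (fun b : Fin (N+1) => (b : ℕ) < r))).min' (hSne 𝒜 h𝒜)))
  · -- maps to target
    intro 𝒜 h𝒜
    obtain ⟨h𝒜', hneg⟩ := Finset.mem_filter.mp h𝒜
    obtain ⟨hpart, hdb⟩ := mem_Ptot.mp h𝒜'
    refine Finset.mem_product.mpr ⟨?_, ?_⟩
    · exact mem_Ptot.mpr ⟨pD_partition hpart, (DB_pD hval hpr).mp hdb⟩
    · have hall : ∀ z ∈ pdown p ((blkOf 𝒜 p).filter (fun b : Fin (N+1) => (b : ℕ) < r)),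
          (z : ℕ) < r := by
        intro z hz
        exact (hval z).mp (Finset.mem_filter.mp (mem_pdown.mp hz)).2
      exact Finset.mem_filter.mpr ⟨Finset.mem_univ _, hall _ (Finset.min'_mem _ (hSne 𝒜 h𝒜))⟩
  · -- injective
    intro 𝒜₁ h₁ 𝒜₂ h₂ heq
    obtain ⟨h₁', hneg₁⟩ := Finset.mem_filter.mp h₁
    obtain ⟨hpart₁, hdb₁⟩ := mem_Ptot.mp h₁'
    obtain ⟨h₂', hneg₂⟩ := Finset.mem_filter.mp h₂
    obtain ⟨hpart₂, hdb₂⟩ := mem_Ptot.mp h₂'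
    have hfst : pD p 𝒜₁ = pD p 𝒜₂ := congrArg Prod.fst heq
    have hsnd : (pdown p ((blkOf 𝒜₁ p).filter (fun b : Fin (N+1) => (b : ℕ) < r))).min'
          (hSne 𝒜₁ h₁)
        = (pdown p ((blkOf 𝒜₂ p).filter (fun b : Fin (N+1) => (b : ℕ) < r))).min'
          (hSne 𝒜₂ h₂) := congrArg Prod.snd heq
    obtain ⟨hT₁, hpT₁⟩ := blkOf_mem hpart₁ p
    obtain ⟨hT₂, hpT₂⟩ := blkOf_mem hpart₂ p
    have hm₁ : (pdown p ((blkOf 𝒜₁ p).filter (fun b : Fin (N+1) => (b : ℕ) < r))).min'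
        (hSne 𝒜₁ h₁) ∈ pdown p (blkOf 𝒜₁ p) :=
      pdown_filter_subset _ _ (Finset.min'_mem _ _)
    have hm₂ : (pdown p ((blkOf 𝒜₂ p).filter (fun b : Fin (N+1) => (b : ℕ) < r))).min'
        (hSne 𝒜₂ h₂) ∈ pdown p (blkOf 𝒜₂ p) :=
      pdown_filter_subset _ _ (Finset.min'_mem _ _)
    have hd₁ : pdown p (blkOf 𝒜₁ p) ∈ pD p 𝒜₁ := mem_pD.mpr
      ⟨Finset.nonempty_iff_ne_empty.mp ⟨_, hm₁⟩, _, hT₁, rfl⟩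
    have hd₂ : pdown p (blkOf 𝒜₂ p) ∈ pD p 𝒜₂ := mem_pD.mpr
      ⟨Finset.nonempty_iff_ne_empty.mp ⟨_, hm₂⟩, _, hT₂, rfl⟩
    rw [← hfst] at hd₂
    rw [← hsnd] at hm₂
    have hTT : pdown p (blkOf 𝒜₁ p) = pdown p (blkOf 𝒜₂ p) :=
      blk_unique (pD_partition hpart₁) hd₁ hm₁ hd₂ hm₂
    have hT₁ne : blkOf 𝒜₁ p ≠ {p} := by
      intro hc
      have h6 : ∃ z : Fin N, p.succAbove z ∈ blkOf 𝒜₁ p :=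
        ⟨_, mem_pdown.mp hm₁⟩
      rw [hc] at h6
      obtain ⟨z, hz⟩ := h6
      exact Fin.succAbove_ne p z (Finset.mem_singleton.mp hz)
    have hT₂ne : blkOf 𝒜₂ p ≠ {p} := by
      intro hc
      have h6 : ∃ z : Fin N, p.succAbove z ∈ blkOf 𝒜₂ p :=
        ⟨_, mem_pdown.mp hm₂⟩
      rw [hc] at h6
      obtain ⟨z, hz⟩ := h6
      exact Fin.succAbove_ne p z (Finset.mem_singleton.mp hz)
    calc 𝒜₁ = pU2 p (pD p 𝒜₁) (pdown p (blkOf 𝒜₁ p)) :=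
          (pU2_pD hpart₁ hT₁ hpT₁ hT₁ne).symm
      _ = pU2 p (pD p 𝒜₂) (pdown p (blkOf 𝒜₂ p)) := by rw [hfst, hTT]
      _ = 𝒜₂ := pU2_pD hpart₂ hT₂ hpT₂ hT₂ne
  · -- surjective
    rintro ⟨ℬ, x⟩ hq
    obtain ⟨hB, hx⟩ := Finset.mem_product.mp hq
    obtain ⟨hpart, hdb⟩ := mem_Ptot.mp hB
    have hxr : (x : ℕ) < r := (Finset.mem_filter.mp hx).2
    obtain ⟨hblk, hxblk⟩ := blkOf_mem hpart x
    have hmem : pU2 p ℬ (blkOf ℬ x) ∈ (Ptot (N+1) r).filter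
        (fun 𝒜 => ¬ ∀ t ∈ 𝒜, p ∈ t → ∀ b : Fin (N+1), b ∈ t → ¬((b : ℕ) < r)) := by
      refine Finset.mem_filter.mpr ⟨mem_Ptot.mpr ⟨pU2_partition hpart hblk, ?_⟩, ?_⟩
      · rw [DB_pD hval hpr, pD_pU2 hpart hblk]
        exact hdb
      · intro hQ
        exact hQ (insert p (pup p (blkOf ℬ x))) (Finset.mem_insert_self _ _)
          (Finset.mem_insert_self _ _) (p.succAbove x)
          (Finset.mem_insert_of_mem (Finset.mem_image_of_mem _ hxblk)) ((hval x).mpr hxr)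
    refine ⟨pU2 p ℬ (blkOf ℬ x), hmem, ?_⟩
    have h1 : pD p (pU2 p ℬ (blkOf ℬ x)) = ℬ := pD_pU2 hpart hblk
    have hspec : pdown p ((blkOf (pU2 p ℬ (blkOf ℬ x)) p).filter
        (fun b : Fin (N+1) => (b : ℕ) < r)) = {x} :=
      spec_of_pU2 hval hpart hdb hxr hblk hxblk
    exact Prod.ext h1 (min'_eq_of_eq_singleton hspec (hSne _ hmem))


----------------------------------------------------------------
-- value computations for succAbove

lemma hval_last {M r : ℕ} :
    ∀ x : Fin M, (((Fin.last M).succAbove x : ℕ) < r ↔ (x : ℕ) < r) := by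
  intro x
  rw [Fin.succAbove_last, Fin.coe_castSucc]

lemma hpr_last {M r : ℕ} (hr : r ≤ M) : ¬(((Fin.last M) : ℕ) < r) := by
  rw [Fin.val_last]
  omega

lemma hval_mid {M s : ℕ} (hs : s < M + 1) :
    ∀ x : Fin M, (((⟨s, hs⟩ : Fin (M+1)).succAbove x : ℕ) < s ↔ (x : ℕ) < s) := by
  intro x
  rcases lt_or_ge (x : ℕ) s with h | h
  · rw [Fin.succAbove_of_castSucc_lt _ _ (by rw [Fin.lt_def]; exact h), Fin.coe_castSucc]
  · rw [Fin.succAbove_of_le_castSucc _ _ (by rw [Fin.le_def]; exact h), Fin.val_succ]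
    omega

----------------------------------------------------------------
-- Stirling number facts

lemma rStirling_of_gt {r n k : ℕ} (h : n < k) : rStirling r n k = 0 := by
  rw [rStirling_eq_card, Finset.card_eq_zero]
  apply Finset.eq_empty_of_forall_notMem
  intro 𝒜 hmem
  obtain ⟨hpart, hcard, -⟩ := mem_Pfin.mp hmem
  have := card_le_ground hpart
  omega

lemma rStirling_base (r : ℕ) : rStirling r 0 0 = 1 := by
  classical
  rw [rStirling_eq_card, Finset.card_eq_one]
  refine ⟨(Finset.univ : Finset (Fin (0+r))).image (fun x => {x}), ?_⟩
  rw [Finset.eq_singleton_iff_unique_mem]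
  constructor
  · refine mem_Pfin.mpr ⟨⟨?_, ?_⟩, ?_, ?_⟩
    · intro t ht
      obtain ⟨x, -, rfl⟩ := Finset.mem_image.mp ht
      exact ⟨x, Finset.mem_singleton_self x⟩
    · intro x
      refine ⟨{x}, ⟨Finset.mem_image_of_mem _ (Finset.mem_univ x), Finset.mem_singleton_self x⟩, ?_⟩
      rintro t ⟨ht, hxt⟩
      obtain ⟨y, -, rfl⟩ := Finset.mem_image.mp ht
      rw [Finset.mem_singleton.mp hxt]
    · rw [Finset.card_image_of_injective _ (fun a b hab => Finset.singleton_injective hab),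
        Finset.card_univ, Fintype.card_fin]
    · intro a ha b hb hab t ht ⟨hat, hbt⟩
      obtain ⟨y, -, rfl⟩ := Finset.mem_image.mp ht
      exact hab ((Finset.mem_singleton.mp hat).trans (Finset.mem_singleton.mp hbt).symm)
  · intro 𝒜 h𝒜
    obtain ⟨hpart, hcard, -⟩ := mem_Pfin.mp h𝒜
    have hsum : ∑ t ∈ 𝒜, t.card = 0 + r := sum_card_blocks hpart
    have hone : ∀ t ∈ 𝒜, (1 : ℕ) = t.card := by
      rw [← Finset.sum_eq_sum_iff_of_le (fun t ht => (hpart.1 t ht).card_pos)]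
      rw [← Finset.card_eq_sum_ones, hcard, hsum]
    ext t
    constructor
    · intro ht
      obtain ⟨x, hx⟩ := Finset.card_eq_one.mp (hone t ht).symm
      rw [hx]
      exact Finset.mem_image_of_mem _ (Finset.mem_univ x)
    · intro ht
      obtain ⟨x, -, rfl⟩ := Finset.mem_image.mp ht
      obtain ⟨T, ⟨hT, hxT⟩, -⟩ := hpart.2 x
      obtain ⟨y, hy⟩ := Finset.card_eq_one.mp (hone T hT).symm
      have : x = y := Finset.mem_singleton.mp (hy ▸ hxT)
      rw [this, ← hy]
      exact hT

lemma rStirling_rec (r n k : ℕ) :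
    rStirling r (n+1) (k+1) = (k+1+r) * rStirling r n (k+1) + rStirling r n k := by
  classical
  rw [rStirling_eq_card, rStirling_eq_card, rStirling_eq_card,
    show n+1+r = (n+r)+1 from by omega, show k+1+r = (k+r)+1 from by omega]
  rw [← Finset.card_filter_add_card_filter_not
    (p := fun 𝒜 => ({Fin.last (n+r)} : Finset (Fin ((n+r)+1))) ∈ 𝒜)
    (s := Pfin ((n+r)+1) ((k+r)+1) r)]
  rw [A1 hval_last (hpr_last (by omega)) (k+r),
    A2 hval_last (hpr_last (by omega)) ((k+r)+1)]
  ring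

lemma rStirling_rec0 (r n : ℕ) : rStirling r (n+1) 0 = r * rStirling r n 0 := by
  classical
  rw [rStirling_eq_card, rStirling_eq_card,
    show n+1+r = (n+r)+1 from by omega, show 0+r = r from by omega]
  rw [← Finset.card_filter_add_card_filter_not
    (p := fun 𝒜 => ({Fin.last (n+r)} : Finset (Fin ((n+r)+1))) ∈ 𝒜)
    (s := Pfin ((n+r)+1) r r)]
  rw [A0 hval_last (hpr_last (by omega)) (by omega),
    A2 hval_last (hpr_last (by omega)) r]
  simp

----------------------------------------------------------------
-- Bell numbers

lemma bell_eq (r n : ℕ) :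
    ∑ k ∈ Finset.range (n+1), rStirling r n k = (Ptot (n+r) r).card := by
  classical
  have hmem : ∀ 𝒜 ∈ Ptot (n+r) r, 𝒜.card - r ∈ Finset.range (n+1) := by
    intro 𝒜 h𝒜
    obtain ⟨hpart, -⟩ := mem_Ptot.mp h𝒜
    have := card_le_ground hpart
    rw [Finset.mem_range]
    omega
  rw [Finset.card_eq_sum_card_fiberwise hmem]
  refine Finset.sum_congr rfl fun k hk => ?_
  rw [rStirling_eq_card]
  congr 1
  ext 𝒜
  simp only [mem_Pfin, Finset.mem_filter, mem_Ptot]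
  constructor
  · rintro ⟨hpart, hcard, hdb⟩
    exact ⟨⟨hpart, hdb⟩, by omega⟩
  · rintro ⟨⟨hpart, hdb⟩, hk'⟩
    have hge : r ≤ 𝒜.card := r_le_card hpart hdb (by omega)
    exact ⟨hpart, by omega, hdb⟩

lemma Ptot_filter_eq {M s : ℕ} (p : Fin (M+1)) (hp : (p : ℕ) = s) :
    (Ptot (M+1) s).filter
        (fun 𝒜 => ∀ t ∈ 𝒜, p ∈ t → ∀ b : Fin (M+1), b ∈ t → ¬((b : ℕ) < s))
      = Ptot (M+1) (s+1) := by
  ext 𝒜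
  simp only [Finset.mem_filter, mem_Ptot]
  constructor
  · rintro ⟨⟨hpart, hdb⟩, hQ⟩
    refine ⟨hpart, ?_⟩
    intro a ha b hb hab t ht ⟨hat, hbt⟩
    have ha' : (a : ℕ) < s + 1 := ha
    have hb' : (b : ℕ) < s + 1 := hb
    rcases Nat.lt_succ_iff_lt_or_eq.mp ha' with has | has
    · rcases Nat.lt_succ_iff_lt_or_eq.mp hb' with hbs | hbs
      · exact hdb a has b hbs hab t ht ⟨hat, hbt⟩
      · have : b = p := Fin.ext (hbs.trans hp.symm)
        exact hQ t ht (this ▸ hbt) a hat has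
    · have : a = p := Fin.ext (has.trans hp.symm)
      rcases Nat.lt_succ_iff_lt_or_eq.mp hb' with hbs | hbs
      · exact hQ t ht (this ▸ hat) b hbt hbs
      · exact hab (Fin.ext (has.trans hbs.symm))
  · rintro ⟨hpart, hdb⟩
    refine ⟨⟨hpart, ?_⟩, ?_⟩
    · intro a ha b hb hab t ht hmem
      exact hdb a (Nat.lt_succ_of_lt ha) b (Nat.lt_succ_of_lt hb) hab t ht hmem
    · intro t ht hpt b hbt hbs
      have hbp : b ≠ p := fun hc => by
        rw [hc, hp] at hbs
        omega
      refine hdb b (Nat.lt_succ_of_lt hbs) p ?_ hbp t ht ⟨hbt, hpt⟩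
      show (p : ℕ) < s + 1
      omega

lemma bell_rec (s n : ℕ) :
    (Ptot (n+s+1) s).card = s * (Ptot (n+s) s).card + (Ptot (n+s+1) (s+1)).card := by
  classical
  have hs : s < (n+s) + 1 := by omega
  rw [← Finset.card_filter_add_card_filter_not
    (p := fun 𝒜 => ∀ t ∈ 𝒜, (⟨s, hs⟩ : Fin ((n+s)+1)) ∈ t →
      ∀ b : Fin ((n+s)+1), b ∈ t → ¬((b : ℕ) < s))
    (s := Ptot ((n+s)+1) s)]
  rw [Ptot_filter_eq (⟨s, hs⟩ : Fin ((n+s)+1)) rfl,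
    B1 (hval_mid hs) (by simp) (by omega)]
  ring

noncomputable def nbell (n r : ℕ) : ℕ := (Ptot (n+r) r).card

lemma nbell_rec (n s : ℕ) : nbell (n+1) s = s * nbell n s + nbell n (s+1) := by
  show (Ptot (n+1+s) s).card = s * (Ptot (n+s) s).card + (Ptot (n+(s+1)) (s+1)).card
  rw [show n+1+s = n+s+1 from by omega]
  exact bell_rec s n

theorem nat_carlitz (n m r : ℕ) :
    nbell (n+m) r = ∑ k ∈ Finset.range (m+1), rStirling r m k * nbell n (k+r) := by
  induction m generalizing n with
  | zero =>
    rw [Finset.sum_range_one, rStirling_base, one_mul, Nat.zero_add]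
    rfl
  | succ m ih =>
    rw [show n+(m+1) = (n+1)+m from by omega, ih (n+1)]
    have step1 : ∑ k ∈ Finset.range (m+1), rStirling r m k * nbell (n+1) (k+r)
        = (∑ k ∈ Finset.range (m+1), (k+r) * (rStirling r m k * nbell n (k+r)))
          + ∑ k ∈ Finset.range (m+1), rStirling r m k * nbell n (k+1+r) := by
      rw [← Finset.sum_add_distrib]
      refine Finset.sum_congr rfl fun k _ => ?_
      rw [nbell_rec n (k+r), show k+r+1 = k+1+r from by omega]
      ring
    rw [step1]
    have hR : ∑ k ∈ Finset.range (m+2), rStirling r (m+1) k * nbell n (k+r)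
        = (∑ j ∈ Finset.range (m+1),
            ((j+1+r) * rStirling r m (j+1) + rStirling r m j) * nbell n (j+1+r))
          + r * rStirling r m 0 * nbell n (0+r) := by
      rw [Finset.sum_range_succ' (fun k => rStirling r (m+1) k * nbell n (k+r)) (m+1),
        rStirling_rec0]
      have h0 : ∑ j ∈ Finset.range (m+1), rStirling r (m+1) (j+1) * nbell n (j+1+r)
          = ∑ j ∈ Finset.range (m+1),
              ((j+1+r) * rStirling r m (j+1) + rStirling r m j) * nbell n (j+1+r) :=
        Finset.sum_congr rfl fun j _ => by rw [rStirling_rec]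
      rw [h0]
    have hL1 : ∑ k ∈ Finset.range (m+1), (k+r) * (rStirling r m k * nbell n (k+r))
        = (∑ j ∈ Finset.range m, (j+1+r) * rStirling r m (j+1) * nbell n (j+1+r))
          + r * rStirling r m 0 * nbell n (0+r) := by
      rw [Finset.sum_range_succ' (fun k => (k+r) * (rStirling r m k * nbell n (k+r))) m]
      have h0 : ∑ j ∈ Finset.range m, (j+1+r) * (rStirling r m (j+1) * nbell n (j+1+r))
          = ∑ j ∈ Finset.range m, (j+1+r) * rStirling r m (j+1) * nbell n (j+1+r) :=
        Finset.sum_congr rfl fun j _ => by ring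
      rw [h0]
      ring
    have hL1' : ∑ j ∈ Finset.range (m+1), (j+1+r) * rStirling r m (j+1) * nbell n (j+1+r)
        = ∑ j ∈ Finset.range m, (j+1+r) * rStirling r m (j+1) * nbell n (j+1+r) := by
      rw [Finset.sum_range_succ, rStirling_of_gt (by omega : m < m+1), mul_zero, zero_mul, add_zero]
    have hR2 : ∑ j ∈ Finset.range (m+1),
          ((j+1+r) * rStirling r m (j+1) + rStirling r m j) * nbell n (j+1+r)
        = (∑ j ∈ Finset.range (m+1), (j+1+r) * rStirling r m (j+1) * nbell n (j+1+r))
          + ∑ j ∈ Finset.range (m+1), rStirling r m j * nbell n (j+1+r) := by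
      rw [← Finset.sum_add_distrib]
      refine Finset.sum_congr rfl fun j _ => ?_
      ring
    rw [hR, hR2, hL1, hL1']
    ring

end Bij


end Carlitz

lemma rBell_one (r n : ℕ) : rBell r n 1 = (Carlitz.nbell n r : ℝ) := by
  rw [rBell]
  simp only [one_pow, mul_one]
  rw [← Nat.cast_sum]
  exact_mod_cast congrArg (Nat.cast : ℕ → ℝ) (Carlitz.bell_eq r n)

/-- Carlitz identity $B_{n+m}(1;r) = \sum_{k=0}^m {m+r \brace k+r}_r B_n(1;k+r)$. -/
theorem rBell_carlitz (n m r : ℕ) :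
    rBell r (n + m) 1 = ∑ k ∈ range (m + 1), (rStirling r m k : ℝ) * rBell (k + r) n 1 := by
  rw [rBell_one]
  calc (Carlitz.nbell (n+m) r : ℝ)
      = ((∑ k ∈ range (m+1), rStirling r m k * Carlitz.nbell n (k+r) : ℕ) : ℝ) := by
        exact_mod_cast congrArg (Nat.cast : ℕ → ℝ) (Carlitz.nat_carlitz n m r)
    _ = ∑ k ∈ range (m+1), (rStirling r m k : ℝ) * rBell (k + r) n 1 := by
        push_cast
        exact Finset.sum_congr rfl fun k _ => by rw [rBell_one]
end

section
/- Ordinary generating function of r-Stirling numbers: for fixed nonnegative integers k and r, Σ_{n≥k} {n+r brace k+r}_r t^n = t^k / Π_{j=0}^{k} (1 − (r+j)t), as an identity of formal power series in t. -/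
open Finset

/-! Deleting the largest element `n + r` from a partition counted by `{n+1+r brace k+1+r}_r`
either removes a singleton block or shrinks one of the `k + 1 + r` blocks of a partition of the
remaining elements, and both operations are reversible. Hence
`{n+1+r brace k+1+r}_r = {n+r brace k+r}_r + (r+k+1) {n+r brace k+1+r}_r`, together with
`{n+1+r brace r}_r = r {n+r brace r}_r` and `{r brace k+r}_r = [k = 0]`. For
`F_k = Σ_n {n+r brace k+r}_r t^n` these say `F_0 (1 - r t) = 1` and
`F_k (1 - (r+k) t) = t F_{k-1}`, and the product formula follows by induction on `k`. -/

namespace PowerSeries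

variable {R : Type*} [CommRing R]

theorem mk_mul_one_sub_C_mul_X (f : ℕ → R) (c : R) :
    mk f * (1 - C c * X) = C (f 0) + X * mk (fun n => f (n + 1) - c * f n) := by
  ext (_ | n)
  · simp
  · simp [mul_sub, ← mul_assoc, mul_comm _ (C c), coeff_succ_mul_X]

theorem mk_mul_prod_one_sub_C_mul_X_eq_X_pow (a : ℕ → ℕ → R) (c : ℕ → R)
    (h_zero_left : ∀ k, a 0 k = if k = 0 then 1 else 0)
    (h_succ_zero : ∀ n, a (n + 1) 0 = c 0 * a n 0)
    (h_succ_succ : ∀ n k, a (n + 1) (k + 1) = a n k + c (k + 1) * a n (k + 1)) (k : ℕ) :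
    mk (fun n => a n k) * ∏ j ∈ range (k + 1), (1 - C (c j) * X) = X ^ k := by
  induction k with
  | zero =>
    have mk_zero : (mk fun _ => (0 : R)) = 0 := by ext; simp
    simp [mk_mul_one_sub_C_mul_X, h_zero_left, h_succ_zero, mk_zero]
  | succ k ih =>
    have h_step : mk (fun n => a n (k + 1)) * (1 - C (c (k + 1)) * X) =
        X * mk (fun n => a n k) := by
      simp [mk_mul_one_sub_C_mul_X, h_zero_left, h_succ_succ]
    calc mk (fun n => a n (k + 1)) * ∏ j ∈ range (k + 2), (1 - C (c j) * X)
        = mk (fun n => a n (k + 1)) * (1 - C (c (k + 1)) * X) *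
            ∏ j ∈ range (k + 1), (1 - C (c j) * X) := by rw [prod_range_succ]; ring
      _ = X ^ (k + 1) := by rw [h_step, mul_assoc, ih, pow_succ']

end PowerSeries

namespace IsSetPartition

variable {N : ℕ} {𝒜 : Finset (Finset (Fin N))}

theorem of_cover_of_eq (h_nonempty : ∀ t ∈ 𝒜, t.Nonempty) (h_cover : ∀ x, ∃ t ∈ 𝒜, x ∈ t)
    (h_eq : ∀ t₁ ∈ 𝒜, ∀ t₂ ∈ 𝒜, ∀ x ∈ t₁, x ∈ t₂ → t₁ = t₂) : IsSetPartition 𝒜 :=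
  ⟨h_nonempty, fun x =>
    let ⟨t, ht, hx⟩ := h_cover x
    ⟨t, ⟨ht, hx⟩, fun t' ⟨ht', hx'⟩ => h_eq t' ht' t ht x hx' hx⟩⟩

theorem eq_of_mem_of_mem (hp : IsSetPartition 𝒜) {t₁ t₂ : Finset (Fin N)} (h₁ : t₁ ∈ 𝒜)
    (h₂ : t₂ ∈ 𝒜) {x : Fin N} (hx₁ : x ∈ t₁) (hx₂ : x ∈ t₂) : t₁ = t₂ :=
  (hp.2 x).unique ⟨h₁, hx₁⟩ ⟨h₂, hx₂⟩

theorem empty_notMem (hp : IsSetPartition 𝒜) : ∅ ∉ 𝒜 :=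
  fun h => not_nonempty_empty (hp.1 ∅ h)

theorem card_le (hp : IsSetPartition 𝒜) : #𝒜 ≤ N := by
  choose block hblock using fun x => (hp.2 x).exists
  calc #𝒜 ≤ #(univ : Finset (Fin N)) := card_le_card_of_surjOn block fun t ht => by
        obtain ⟨x, hx⟩ := hp.1 t ht
        exact ⟨x, mem_univ x, hp.eq_of_mem_of_mem (hblock x).1 ht (hblock x).2 hx⟩
    _ = N := card_fin N

theorem le_card (hp : IsSetPartition 𝒜) {r : ℕ} (hr : r ≤ N)
    (hd : DistinctBlocks 𝒜 {x | (x : ℕ) < r}) : r ≤ #𝒜 := by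
  choose block hblock using fun x => (hp.2 x).exists
  calc r = #(univ : Finset (Fin r)) := (card_fin r).symm
    _ ≤ #𝒜 := card_le_card_of_injOn (fun i => block (Fin.castLE hr i))
      (fun i _ => (hblock _).1) fun i _ j _ (hij : block _ = block _) => by
        by_contra hne
        exact hd (Fin.castLE hr i) i.2 (Fin.castLE hr j) j.2 (by simpa [Fin.ext_iff] using hne)
          _ (hblock _).1 ⟨(hblock _).2, hij ▸ (hblock _).2⟩

theorem nonempty [NeZero N] (hp : IsSetPartition 𝒜) : 𝒜.Nonempty :=
  let ⟨t, ⟨ht, _⟩, _⟩ := hp.2 0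
  ⟨t, ht⟩

theorem eq_image_singleton (hp : IsSetPartition 𝒜) (hd : DistinctBlocks 𝒜 Set.univ) :
    𝒜 = univ.image ({·}) := by
  have h_singleton : ∀ t ∈ 𝒜, ∀ x ∈ t, t = {x} := fun t ht x hx =>
    eq_singleton_iff_unique_mem.2 ⟨hx, fun y hy => by_contra fun hyx =>
      hd y trivial x trivial hyx t ht ⟨hy, hx⟩⟩
  ext t
  simp only [mem_image, mem_univ, true_and]
  constructor
  · intro ht
    obtain ⟨x, hx⟩ := hp.1 t ht
    exact ⟨x, (h_singleton t ht x hx).symm⟩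
  · rintro ⟨x, rfl⟩
    obtain ⟨t, ⟨ht, hx⟩, -⟩ := hp.2 x
    exact h_singleton t ht x hx ▸ ht

end IsSetPartition

theorem isSetPartition_image_singleton (N : ℕ) :
    IsSetPartition (univ.image ({·} : Fin N → Finset (Fin N))) :=
  .of_cover_of_eq (by simp) (fun x => ⟨{x}, by simp⟩) (by simp)

theorem Finset.mem_of_mem_insert_of_nonempty {α : Type*} [DecidableEq α] {𝒟 : Finset (Finset α)}
    {t d : Finset α} (ht : t = ∅ ∨ t ∈ 𝒟) (hd : d ∈ insert t 𝒟) (hne : d.Nonempty) : d ∈ 𝒟 := by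
  rcases mem_insert.1 hd with rfl | hd
  · exact ht.resolve_left hne.ne_empty
  · exact hd

section Extension

variable {m : ℕ}

def restrictBlock (T : Finset (Fin (m + 1))) : Finset (Fin m) :=
  univ.filter (·.castSucc ∈ T)

def extendBlock (t d : Finset (Fin m)) : Finset (Fin (m + 1)) :=
  if d = t then insert (Fin.last m) (d.map Fin.castSuccEmb) else d.map Fin.castSuccEmb

/-- The partition of `Fin (m + 1)` obtained from `𝒟` by adding the new point `last m` to the
block `t`, or as a new singleton block when `t = ∅`. -/
def extendPartition (𝒟 : Finset (Finset (Fin m))) (t : Finset (Fin m)) :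
    Finset (Finset (Fin (m + 1))) :=
  (insert t 𝒟).image (extendBlock t)

variable {𝒟 : Finset (Finset (Fin m))} {t d : Finset (Fin m)} {T : Finset (Fin (m + 1))} {y : Fin m}

@[simp] theorem mem_restrictBlock : y ∈ restrictBlock T ↔ y.castSucc ∈ T := by
  simp [restrictBlock]

@[simp] theorem last_mem_extendBlock : Fin.last m ∈ extendBlock t d ↔ d = t := by
  unfold extendBlock; split_ifs <;> simp [*]

@[simp] theorem castSucc_mem_extendBlock : y.castSucc ∈ extendBlock t d ↔ y ∈ d := by
  unfold extendBlock; split_ifs <;> simp [Fin.castSucc_ne_last]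

@[simp] theorem restrictBlock_extendBlock : restrictBlock (extendBlock t d) = d := by
  ext; simp

theorem extendBlock_injective (t : Finset (Fin m)) : Function.Injective (extendBlock t) :=
  Function.LeftInverse.injective fun _ => restrictBlock_extendBlock

theorem card_extendPartition (𝒟 : Finset (Finset (Fin m))) (t : Finset (Fin m)) :
    #(extendPartition 𝒟 t) = #(insert t 𝒟) :=
  card_image_of_injective _ (extendBlock_injective t)

theorem extendPartition_inj {𝒟₁ 𝒟₂ : Finset (Finset (Fin m))} {t₁ t₂ : Finset (Fin m)}
    (h : extendPartition 𝒟₁ t₁ = extendPartition 𝒟₂ t₂) :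
    t₁ = t₂ ∧ insert t₁ 𝒟₁ = insert t₂ 𝒟₂ := by
  have h_restrict := congrArg (image restrictBlock) h
  simp only [extendPartition, image_image, Function.comp_def, restrictBlock_extendBlock,
    image_id'] at h_restrict
  refine ⟨?_, h_restrict⟩
  have : extendBlock t₁ t₁ ∈ extendPartition 𝒟₂ t₂ := h ▸ mem_image_of_mem _ (mem_insert_self _ _)
  obtain ⟨d, -, hd⟩ := mem_image.1 this
  have hlast := hd ▸ last_mem_extendBlock.2 rfl
  rw [last_mem_extendBlock] at hlast
  simpa [hlast] using congrArg restrictBlock hd.symm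

theorem IsSetPartition.extendPartition (hp : IsSetPartition 𝒟) (ht : t = ∅ ∨ t ∈ 𝒟) :
    IsSetPartition (extendPartition 𝒟 t) := by
  refine .of_cover_of_eq ?_ (fun x => ?_) ?_
  · simp only [_root_.extendPartition, mem_image, forall_exists_index, and_imp]
    rintro _ d hd rfl
    by_cases hdt : d = t
    · exact ⟨Fin.last m, last_mem_extendBlock.2 hdt⟩
    · obtain ⟨y, hy⟩ := hp.1 d ((mem_insert.1 hd).resolve_left hdt)
      exact ⟨y.castSucc, castSucc_mem_extendBlock.2 hy⟩
  · rcases Fin.eq_castSucc_or_eq_last x with ⟨y, rfl⟩ | rfl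
    · obtain ⟨d, ⟨hd, hy⟩, -⟩ := hp.2 y
      exact ⟨_, mem_image_of_mem _ (mem_insert_of_mem hd), castSucc_mem_extendBlock.2 hy⟩
    · exact ⟨_, mem_image_of_mem _ (mem_insert_self t 𝒟), last_mem_extendBlock.2 rfl⟩
  · simp only [_root_.extendPartition, mem_image, forall_exists_index, and_imp]
    rintro _ d₁ hd₁ rfl _ d₂ hd₂ rfl x hx₁ hx₂
    congr 1
    rcases Fin.eq_castSucc_or_eq_last x with ⟨y, rfl⟩ | rfl
    · rw [castSucc_mem_extendBlock] at hx₁ hx₂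
      exact hp.eq_of_mem_of_mem (mem_of_mem_insert_of_nonempty ht hd₁ ⟨_, hx₁⟩)
        (mem_of_mem_insert_of_nonempty ht hd₂ ⟨_, hx₂⟩) hx₁ hx₂
    · rw [last_mem_extendBlock] at hx₁ hx₂
      rw [hx₁, hx₂]

theorem DistinctBlocks.extendPartition {r : ℕ} (hr : r ≤ m)
    (h𝒟 : DistinctBlocks 𝒟 {x | (x : ℕ) < r}) (ht : t = ∅ ∨ t ∈ 𝒟) :
    DistinctBlocks (extendPartition 𝒟 t) {x | (x : ℕ) < r} := by
  have h_castSucc : ∀ x : Fin (m + 1), (x : ℕ) < r → ∃ y : Fin m, y.castSucc = x := fun x hx =>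
    Fin.exists_castSucc_eq.2 fun h => by rw [h, Fin.val_last] at hx; omega
  rintro a ha c hc hac T hT ⟨hda, hdc⟩
  obtain ⟨d, hd, rfl⟩ := mem_image.1 hT
  obtain ⟨a, rfl⟩ := h_castSucc a ha
  obtain ⟨c, rfl⟩ := h_castSucc c hc
  rw [castSucc_mem_extendBlock] at hda hdc
  exact h𝒟 a ha c hc (ne_of_apply_ne _ hac) d (mem_of_mem_insert_of_nonempty ht hd ⟨_, hda⟩)
    ⟨hda, hdc⟩

end Extension

section Restriction

variable {m : ℕ} {𝒜 : Finset (Finset (Fin (m + 1)))} {T : Finset (Fin (m + 1))}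

def restrictPartition (𝒜 : Finset (Finset (Fin (m + 1)))) : Finset (Finset (Fin m)) :=
  (𝒜.image restrictBlock).erase ∅

theorem last_mem_of_restrictBlock_eq_empty (hT : T.Nonempty) (h : restrictBlock T = ∅) :
    Fin.last m ∈ T := by
  obtain ⟨x, hx⟩ := hT
  rcases Fin.eq_castSucc_or_eq_last x with ⟨y, rfl⟩ | rfl
  · exact absurd (mem_restrictBlock.2 hx) (h ▸ notMem_empty y)
  · exact hx

theorem IsSetPartition.injOn_restrictBlock (hp : IsSetPartition 𝒜) :
    Set.InjOn restrictBlock (𝒜 : Set (Finset (Fin (m + 1)))) := by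
  intro U hU V hV h
  obtain hempty | ⟨y, hy⟩ := (restrictBlock U).eq_empty_or_nonempty
  · exact hp.eq_of_mem_of_mem hU hV (last_mem_of_restrictBlock_eq_empty (hp.1 U hU) hempty)
      (last_mem_of_restrictBlock_eq_empty (hp.1 V hV) (h ▸ hempty))
  · exact hp.eq_of_mem_of_mem hU hV (mem_restrictBlock.1 hy) (mem_restrictBlock.1 (h ▸ hy))

theorem IsSetPartition.restrictPartition (hp : IsSetPartition 𝒜) :
    IsSetPartition (restrictPartition 𝒜) := by
  refine .of_cover_of_eq (fun d hd => nonempty_iff_ne_empty.2 (ne_of_mem_erase hd))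
    (fun y => ?_) ?_
  · obtain ⟨U, ⟨hU, hy⟩, -⟩ := hp.2 y.castSucc
    exact ⟨restrictBlock U, mem_erase.2 ⟨ne_empty_of_mem (mem_restrictBlock.2 hy),
      mem_image_of_mem _ hU⟩, mem_restrictBlock.2 hy⟩
  · simp only [_root_.restrictPartition, mem_erase, mem_image, and_imp, forall_exists_index]
    rintro _ - U₁ hU₁ rfl _ - U₂ hU₂ rfl y hy₁ hy₂
    rw [hp.eq_of_mem_of_mem hU₁ hU₂ (mem_restrictBlock.1 hy₁) (mem_restrictBlock.1 hy₂)]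

theorem extendPartition_restrictPartition (hp : IsSetPartition 𝒜) (hT : T ∈ 𝒜)
    (hlast : Fin.last m ∈ T) :
    extendPartition (restrictPartition 𝒜) (restrictBlock T) = 𝒜 := by
  set t := restrictBlock T
  have h_eq_iff : ∀ U ∈ 𝒜, restrictBlock U = t ↔ U = T := fun U hU =>
    ⟨fun h => hp.injOn_restrictBlock hU hT h, fun h => h ▸ rfl⟩
  have h_insert : insert t (restrictPartition 𝒜) = 𝒜.image restrictBlock := by
    by_cases ht : t = ∅
    · rw [restrictPartition, ← ht, insert_erase (mem_image_of_mem _ hT)]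
    · rw [restrictPartition, erase_eq_of_notMem, insert_eq_of_mem (mem_image_of_mem _ hT)]
      intro hmem
      obtain ⟨U, hU, hempty⟩ := mem_image.1 hmem
      obtain rfl : U = T := hp.eq_of_mem_of_mem hU hT
        (last_mem_of_restrictBlock_eq_empty (hp.1 U hU) hempty) hlast
      exact ht hempty
  have h_block : ∀ U ∈ 𝒜, extendBlock t (restrictBlock U) = U := by
    intro U hU
    ext x
    rcases Fin.eq_castSucc_or_eq_last x with ⟨y, rfl⟩ | rfl
    · simp
    · rw [last_mem_extendBlock, h_eq_iff U hU]
      exact ⟨fun h => h ▸ hlast, fun h => hp.eq_of_mem_of_mem hU hT h hlast⟩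
  rw [extendPartition, h_insert, image_image]
  exact (image_congr h_block).trans image_id

theorem DistinctBlocks.restrictPartition {r : ℕ} (h𝒜 : DistinctBlocks 𝒜 {x | (x : ℕ) < r}) :
    DistinctBlocks (restrictPartition 𝒜) {y | (y : ℕ) < r} := by
  rintro a ha c hc hac d hd ⟨had, hcd⟩
  obtain ⟨U, hU, rfl⟩ := mem_image.1 (mem_of_mem_erase hd)
  exact h𝒜 a.castSucc ha c.castSucc hc (Fin.castSucc_injective m |>.ne hac) U hU
    ⟨mem_restrictBlock.1 had, mem_restrictBlock.1 hcd⟩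

end Restriction

abbrev RPartition (M r b : ℕ) : Type :=
  {𝒜 : Finset (Finset (Fin M)) //
    IsSetPartition 𝒜 ∧ #𝒜 = b ∧ DistinctBlocks 𝒜 {x | (x : ℕ) < r}}

namespace RPartition

variable {m r b : ℕ}

def extend (hr : r ≤ m) :
    RPartition m r b ⊕ (Σ 𝒟 : RPartition m r (b + 1), 𝒟.1) → RPartition (m + 1) r (b + 1)
  | .inl 𝒟 =>
    ⟨extendPartition 𝒟.1 ∅, 𝒟.2.1.extendPartition (.inl rfl),
      by rw [card_extendPartition, card_insert_of_notMem 𝒟.2.1.empty_notMem, 𝒟.2.2.1],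
      𝒟.2.2.2.extendPartition hr (.inl rfl)⟩
  | .inr ⟨𝒟, t⟩ =>
    ⟨extendPartition 𝒟.1 t, 𝒟.2.1.extendPartition (.inr t.2),
      by rw [card_extendPartition, insert_eq_of_mem t.2, 𝒟.2.2.1],
      𝒟.2.2.2.extendPartition hr (.inr t.2)⟩

theorem extend_injective (hr : r ≤ m) : Function.Injective (extend (b := b) hr) := by
  rintro (⟨𝒟₁, hp₁, _⟩ | ⟨⟨𝒟₁, hp₁, _⟩, t₁, ht₁⟩) (⟨𝒟₂, hp₂, _⟩ | ⟨⟨𝒟₂, hp₂, _⟩, t₂, ht₂⟩) h <;>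
    simp only [extend, Subtype.mk.injEq] at h <;>
    obtain ⟨ht, h_insert⟩ := extendPartition_inj h
  · obtain rfl : 𝒟₁ = 𝒟₂ := by
      rw [← erase_insert hp₁.empty_notMem, h_insert, erase_insert hp₂.empty_notMem]
    rfl
  · exact absurd (ht ▸ ht₂) hp₂.empty_notMem
  · exact absurd (ht ▸ ht₁) hp₁.empty_notMem
  · subst ht
    obtain rfl : 𝒟₁ = 𝒟₂ := by rwa [insert_eq_of_mem ht₁, insert_eq_of_mem ht₂] at h_insert
    rfl

theorem extend_surjective (hr : r ≤ m) : Function.Surjective (extend (b := b) hr) := by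
  rintro ⟨𝒜, hp, hcard, hd⟩
  obtain ⟨T, ⟨hT, hlast⟩, -⟩ := hp.2 (Fin.last m)
  have h_extend := extendPartition_restrictPartition hp hT hlast
  have hcard' := card_extendPartition (restrictPartition 𝒜) (restrictBlock T)
  rw [h_extend, hcard] at hcard'
  by_cases ht : restrictBlock T = ∅
  · rw [ht] at h_extend hcard'
    rw [card_insert_of_notMem hp.restrictPartition.empty_notMem, add_left_inj] at hcard'
    exact ⟨.inl ⟨_, hp.restrictPartition, hcard'.symm, hd.restrictPartition⟩,
      Subtype.ext h_extend⟩
  · have ht_mem : restrictBlock T ∈ restrictPartition 𝒜 :=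
      mem_erase.2 ⟨ht, mem_image_of_mem _ hT⟩
    rw [insert_eq_of_mem ht_mem] at hcard'
    exact ⟨.inr ⟨⟨_, hp.restrictPartition, hcard'.symm, hd.restrictPartition⟩, _, ht_mem⟩,
      Subtype.ext h_extend⟩

theorem card_succ_succ (hr : r ≤ m) :
    Nat.card (RPartition (m + 1) r (b + 1)) =
      Nat.card (RPartition m r b) + (b + 1) * Nat.card (RPartition m r (b + 1)) := by
  classical
  rw [← Nat.card_eq_of_bijective _ ⟨extend_injective hr, extend_surjective hr⟩, Nat.card_sum,
    Nat.card_sigma]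
  simp_rw [Nat.card_eq_fintype_card, Fintype.card_coe, fun 𝒟 : RPartition m r (b + 1) => 𝒟.2.2.1,
    sum_const, card_univ, smul_eq_mul, mul_comm]

theorem card_eq_zero_of_lt_of_le (hb : b < r) (hr : r ≤ m) : Nat.card (RPartition m r b) = 0 :=
  Nat.card_eq_zero.2 <| .inl ⟨fun 𝒜 => by
    have := 𝒜.2.1.le_card hr 𝒜.2.2.2
    have := 𝒜.2.2.1
    omega⟩

theorem card_eq_zero_of_gt (hb : m < b) : Nat.card (RPartition m r b) = 0 :=
  Nat.card_eq_zero.2 <| .inl ⟨fun 𝒜 => by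
    have := 𝒜.2.1.card_le
    have := 𝒜.2.2.1
    omega⟩

theorem card_succ_zero : Nat.card (RPartition (m + 1) r 0) = 0 :=
  Nat.card_eq_zero.2 <| .inl ⟨fun 𝒜 => 𝒜.2.1.nonempty.ne_empty (card_eq_zero.1 𝒜.2.2.1)⟩

theorem card_self (r : ℕ) : Nat.card (RPartition r r r) = 1 := by
  have h_univ : {x : Fin r | (x : ℕ) < r} = Set.univ := Set.eq_univ_of_forall Fin.is_lt
  refine Nat.card_eq_one_iff_exists.2
    ⟨⟨univ.image ({·}), isSetPartition_image_singleton r, ?_, ?_⟩, fun 𝒜 => ?_⟩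
  · rw [card_image_of_injective _ singleton_injective, card_univ, Fintype.card_fin]
  · rintro a - c - hac t ht ⟨ha, hc⟩
    obtain ⟨x, -, rfl⟩ := mem_image.1 ht
    exact hac ((mem_singleton.1 ha).trans (mem_singleton.1 hc).symm)
  · exact Subtype.ext (𝒜.2.1.eq_image_singleton (h_univ ▸ 𝒜.2.2.2))

end RPartition

theorem rStirling_eq_card (r n k : ℕ) :
    rStirling r n k = Nat.card (RPartition (n + r) r (k + r)) := rfl

theorem rStirling_zero_left (r k : ℕ) : rStirling r 0 k = if k = 0 then 1 else 0 := by
  rw [rStirling_eq_card, zero_add]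
  split_ifs with hk
  · rw [hk, zero_add, RPartition.card_self]
  · exact RPartition.card_eq_zero_of_gt (by omega)

theorem rStirling_succ_zero (r n : ℕ) : rStirling r (n + 1) 0 = r * rStirling r n 0 := by
  rw [rStirling_eq_card, rStirling_eq_card, zero_add]
  rcases r with _ | r
  · rw [RPartition.card_succ_zero, zero_mul]
  · rw [show n + 1 + (r + 1) = n + (r + 1) + 1 by omega,
      RPartition.card_succ_succ (by omega),
      RPartition.card_eq_zero_of_lt_of_le (by omega) (by omega), zero_add]

theorem rStirling_succ_succ (r n k : ℕ) :
    rStirling r (n + 1) (k + 1) = rStirling r n k + (r + (k + 1)) * rStirling r n (k + 1) := by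
  rw [rStirling_eq_card, rStirling_eq_card, rStirling_eq_card,
    show n + 1 + r = n + r + 1 by omega, show k + 1 + r = k + r + 1 by omega,
    RPartition.card_succ_succ (by omega), show k + r + 1 = r + (k + 1) by omega]

open PowerSeries in
/-- $\sum_{n} {n+r \brace k+r}_r t^n = t^k / \prod_{j=0}^k (1-(r+j)t)$. -/
theorem rStirling_ogf (k r : ℕ) :
    PowerSeries.mk (fun n => (rStirling r n k : ℝ)) =
      (PowerSeries.X : PowerSeries ℝ) ^ k *
        (∏ j ∈ range (k + 1),
          (1 - PowerSeries.C ((r + j : ℕ) : ℝ) * PowerSeries.X))⁻¹ := by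
  rw [eq_mul_inv_iff_mul_eq (by simp [map_prod])]
  refine mk_mul_prod_one_sub_C_mul_X_eq_X_pow (fun n k => (rStirling r n k : ℝ))
    (fun j => ((r + j : ℕ) : ℝ)) (fun k => ?_) (fun n => ?_) (fun n k => ?_) k
  · rw [rStirling_zero_left]; split_ifs <;> simp
  · simp [rStirling_succ_zero]
  · simp [rStirling_succ_succ]
end
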